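/- arXiv:1004.0261 — 10 statements merged into one kernel-verified Lean document; each statement's English description precedes it below -/
import Mathlib

section
/- If a, b, c are positive integers with a² + b² = c², then a² + c² is a congruent number, i.e., there exist positive rational numbers x, y, z with x² + y² = z² and x·y = 2·(a² + c²). -/
/-!
Euclid's triangle with legs `2c²a²` and `c⁴ - a⁴` has area `a²c²(c⁴ - a⁴) = (a² + c²)(abc)²`,
because `c² - a² = b²`. Shrinking it by the factor `abc` gives a rational right triangle of
area `a² + c²`.
-/

def IsCongruentNumber (n : ℚ) : Prop :=
  ∃ x y z : ℚ, 0 < x ∧ 0 < y ∧ 0 < z ∧ x ^ 2 + y ^ 2 = z ^ 2 ∧ x * y = 2 * n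

namespace IsCongruentNumber

theorem of_mul_sq {n t : ℚ} (ht : 0 < t) (h : IsCongruentNumber (n * t ^ 2)) :
    IsCongruentNumber n := by
  obtain ⟨x, y, z, hx, hy, hz, hpyth, harea⟩ := h
  refine ⟨x / t, y / t, z / t, by positivity, by positivity, by positivity, ?_, ?_⟩
  · rw [div_pow, div_pow, div_pow, ← add_div, hpyth]
  · field_simp
    linear_combination harea

theorem euclid {m n : ℚ} (hn : 0 < n) (hnm : n < m) :
    IsCongruentNumber (m * n * (m ^ 2 - n ^ 2)) := by
  have hm : 0 < m := hn.trans hnm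
  have hsq : n ^ 2 < m ^ 2 := by gcongr
  exact ⟨2 * m * n, m ^ 2 - n ^ 2, m ^ 2 + n ^ 2, by positivity, sub_pos.mpr hsq, by positivity,
    by ring, by ring⟩

end IsCongruentNumber

theorem stmt_4 (a b c : ℕ) (ha : 0 < a) (hb : 0 < b) (hc : 0 < c)
    (h : a^2 + b^2 = c^2) :
    ∃ x y z : ℚ, 0 < x ∧ 0 < y ∧ 0 < z ∧ x^2 + y^2 = z^2 ∧
      x * y = 2 * (a^2 + c^2) := by
  have hq : (a : ℚ) ^ 2 + (b : ℚ) ^ 2 = (c : ℚ) ^ 2 := by exact_mod_cast h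
  have hac : (a : ℚ) ^ 2 < (c : ℚ) ^ 2 := hq ▸ lt_add_of_pos_right _ (by positivity)
  have hEuclid := IsCongruentNumber.euclid (by positivity) hac
  have hArea : (c : ℚ) ^ 2 * (a : ℚ) ^ 2 * (((c : ℚ) ^ 2) ^ 2 - ((a : ℚ) ^ 2) ^ 2)
      = ((a : ℚ) ^ 2 + (c : ℚ) ^ 2) * ((a : ℚ) * b * c) ^ 2 := by
    linear_combination (-(a : ℚ) ^ 2 * (c : ℚ) ^ 2 * ((a : ℚ) ^ 2 + (c : ℚ) ^ 2)) * hq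
  rw [hArea] at hEuclid
  exact IsCongruentNumber.of_mul_sq (by positivity) hEuclid
end

section
/- If a, b, c are positive integers with a² + b² = c² and b > a, then b² − a² is a congruent number, i.e., there exist positive rational numbers x, y, z with x² + y² = z² and x·y = 2·(b² − a²). -/
namespace IsCongruentNumber

theorem of_sq_add_eq_sq_of_sq_add_eq_sq {n u v w : ℚ} (hn : 0 < n)
    (huv : u ^ 2 + n = v ^ 2) (hvw : v ^ 2 + n = w ^ 2) : IsCongruentNumber n := by
  have huv' : |u| ^ 2 + n = |v| ^ 2 := by simpa only [sq_abs] using huv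
  have hvw' : |v| ^ 2 + n = |w| ^ 2 := by simpa only [sq_abs] using hvw
  have huw : |u| < |w| := sq_lt_sq.mp (by linarith)
  have hv : 0 < |v| := abs_pos.mpr (by rintro rfl; nlinarith [sq_nonneg u])
  refine ⟨|w| - |u|, |w| + |u|, 2 * |v|, by linarith, by linarith [abs_nonneg u], by positivity, ?_, ?_⟩
  · linear_combination 2 * huv' - 2 * hvw'
  · linear_combination -huv' - hvw'

theorem of_mem_curve {n x y : ℚ} (hn : 0 < n) (hy : y ≠ 0) (h : y ^ 2 = x ^ 3 - n ^ 2 * x) :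
    IsCongruentNumber n := by
  refine of_sq_add_eq_sq_of_sq_add_eq_sq (u := (x ^ 2 - 2 * n * x - n ^ 2) / (2 * y))
    (v := (x ^ 2 + n ^ 2) / (2 * y)) (w := (x ^ 2 + 2 * n * x - n ^ 2) / (2 * y)) hn ?_ ?_
  · field_simp
    linear_combination 4 * n * h
  · field_simp
    linear_combination 4 * n * h

end IsCongruentNumber

theorem stmt_5 (a b c : ℕ) (ha : 0 < a) (hb : 0 < b) (hc : 0 < c)
    (h : a^2 + b^2 = c^2) (hba : a < b) :
    ∃ x y z : ℚ, 0 < x ∧ 0 < y ∧ 0 < z ∧ x^2 + y^2 = z^2 ∧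
      x * y = 2 * ((b:ℚ)^2 - (a:ℚ)^2) := by
  have hq : (a : ℚ) ^ 2 + (b : ℚ) ^ 2 = (c : ℚ) ^ 2 := by exact_mod_cast h
  have hn : 0 < (b : ℚ) ^ 2 - (a : ℚ) ^ 2 := by
    have : (a : ℚ) < b := by exact_mod_cast hba
    nlinarith [(Nat.cast_pos.mpr ha : (0 : ℚ) < a)]
  have hy : (2 * a * b * c : ℚ) ≠ 0 := by positivity
  have hmem : (2 * a * b * c : ℚ) ^ 2 = ((c : ℚ) ^ 2) ^ 3 - ((b : ℚ) ^ 2 - a ^ 2) ^ 2 * (c : ℚ) ^ 2 := by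
    linear_combination (c : ℚ) ^ 2 * ((a : ℚ) ^ 2 + b ^ 2 + c ^ 2) * hq
  exact IsCongruentNumber.of_mem_curve hn hy hmem
end

section
/- For positive integers s > t, the number s⁴ − t⁴ is a congruent number: there exist positive rational numbers x, y, z with x² + y² = z² and x·y = 2·(s⁴ − t⁴). -/
/-!
Euclid's parametrisation with `m = s²`, `n = t²` gives the right triangle with legs `s⁴ - t⁴`,
`2 s² t²` and hypotenuse `s⁴ + t⁴`, of area `(s t)² (s⁴ - t⁴)`. Shrinking it by the factor `s t`
divides the area by `(s t)²`, leaving a right triangle of area `s⁴ - t⁴`.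
-/

theorem exists_right_triangle_mul_eq_two_mul_pow_four_sub_pow_four {K : Type*} [Field K]
    [LinearOrder K] [IsStrictOrderedRing K] {s t : K} (ht : 0 < t) (hst : t < s) :
    ∃ x y z : K, 0 < x ∧ 0 < y ∧ 0 < z ∧ x ^ 2 + y ^ 2 = z ^ 2 ∧ x * y = 2 * (s ^ 4 - t ^ 4) := by
  have hs : 0 < s := ht.trans hst
  have hdiff : 0 < s ^ 4 - t ^ 4 := sub_pos.2 (pow_lt_pow_left₀ hst ht.le (by norm_num))
  refine ⟨(s ^ 4 - t ^ 4) / (s * t), 2 * s * t, (s ^ 4 + t ^ 4) / (s * t),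
    by positivity, by positivity, by positivity, ?_, ?_⟩
  · field_simp
    ring
  · field_simp

theorem stmt_7 (s t : ℕ) (ht : 0 < t) (hst : t < s) :
    ∃ x y z : ℚ, 0 < x ∧ 0 < y ∧ 0 < z ∧ x^2 + y^2 = z^2 ∧
      x * y = 2 * ((s:ℚ)^4 - (t:ℚ)^4) :=
  exists_right_triangle_mul_eq_two_mul_pow_four_sub_pow_four (by exact_mod_cast ht)
    (by exact_mod_cast hst)
end

section
/- For positive integers s > t, the number 2·(s⁴ + t⁴) is a congruent number: there exist positive rational numbers x, y, z with x² + y² = z² and x·y = 4·(s⁴ + t⁴). -/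
/-!
Euclid's triangle `(m² - n², 2mn, m² + n²)` has area `mn(m² - n²)`. For `m = s⁴ + t⁴` and
`n = 2s²t²` one has `m² - n² = (s⁴ - t⁴)²`, so the area is `2(s⁴ + t⁴)` times the square
`(st(s⁴ - t⁴))²`, and dividing the sides by `st(s⁴ - t⁴)` gives a triangle of area `2(s⁴ + t⁴)`.
-/

variable {K : Type*} [Field K] [LinearOrder K] [IsStrictOrderedRing K]

def IsCongruent (N : K) : Prop :=
  ∃ x y z : K, 0 < x ∧ 0 < y ∧ 0 < z ∧ x ^ 2 + y ^ 2 = z ^ 2 ∧ x * y = 2 * N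

theorem isCongruent_euclid {m n : K} (hn : 0 < n) (hnm : n < m) :
    IsCongruent (m * n * (m ^ 2 - n ^ 2)) := by
  have hm : 0 < m := hn.trans hnm
  have hsq : 0 < m ^ 2 - n ^ 2 := sub_pos.2 (pow_lt_pow_left₀ hnm hn.le two_ne_zero)
  exact ⟨m ^ 2 - n ^ 2, 2 * m * n, m ^ 2 + n ^ 2, hsq, by positivity, by positivity,
    by ring, by ring⟩

theorem IsCongruent.of_sq_mul {c N : K} (hc : c ≠ 0) (h : IsCongruent (c ^ 2 * N)) :
    IsCongruent N := by
  obtain ⟨x, y, z, hx, hy, hz, hxyz, harea⟩ := h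
  have hc' : 0 < |c| := abs_pos.2 hc
  refine ⟨x / |c|, y / |c|, z / |c|, by positivity, by positivity, by positivity, ?_, ?_⟩
  · rw [div_pow, div_pow, div_pow, ← add_div, hxyz]
  · rw [div_mul_div_comm, ← sq, sq_abs, harea]
    field_simp

theorem stmt_8 (s t : ℕ) (ht : 0 < t) (hst : t < s) :
    ∃ x y z : ℚ, 0 < x ∧ 0 < y ∧ 0 < z ∧ x^2 + y^2 = z^2 ∧
      x * y = 4 * ((s:ℚ)^4 + (t:ℚ)^4) := by
  have ht' : (0 : ℚ) < t := by exact_mod_cast ht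
  have hst' : (t : ℚ) < s := by exact_mod_cast hst
  have hs' : (0 : ℚ) < s := ht'.trans hst'
  have hn : (0 : ℚ) < 2 * (s : ℚ) ^ 2 * t ^ 2 := by positivity
  have hnm : 2 * (s : ℚ) ^ 2 * t ^ 2 < s ^ 4 + t ^ 4 := by
    nlinarith [pow_lt_pow_left₀ hst' ht'.le two_ne_zero]
  have hscale : (s : ℚ) * t * (s ^ 4 - t ^ 4) ≠ 0 := by
    have : (t : ℚ) ^ 4 < s ^ 4 := pow_lt_pow_left₀ hst' ht'.le four_ne_zero
    exact mul_ne_zero (by positivity) (sub_ne_zero.2 this.ne')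
  obtain ⟨x, y, z, hx, hy, hz, hxyz, harea⟩ :=
    IsCongruent.of_sq_mul hscale (N := 2 * ((s : ℚ) ^ 4 + t ^ 4))
      (by convert isCongruent_euclid hn hnm using 1; ring)
  exact ⟨x, y, z, hx, hy, hz, hxyz, by rw [harea]; ring⟩
end

section
/- For positive integers s > t, the number s⁴ + t⁴ + 6·s²·t² is a congruent number: there exist positive rational numbers x, y, z with x² + y² = z² and x·y = 2·(s⁴ + t⁴ + 6·s²·t²). -/
namespace IsCongruentNumber

theorem of_sq_mul {k n : ℚ} (hk : 0 < k) (h : IsCongruentNumber (k ^ 2 * n)) :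
    IsCongruentNumber n := by
  obtain ⟨x, y, z, hx, hy, hz, hxyz, harea⟩ := h
  refine ⟨x / k, y / k, z / k, by positivity, by positivity, by positivity, ?_, ?_⟩
  · field_simp
    exact hxyz
  · field_simp
    linear_combination harea

theorem mul_mul_sq_sub_sq {p q : ℚ} (hq : 0 < q) (hqp : q < p) :
    IsCongruentNumber (p * q * (p ^ 2 - q ^ 2)) := by
  have hp : 0 < p := hq.trans hqp
  have hpq : 0 < p ^ 2 - q ^ 2 := by nlinarith
  exact ⟨2 * p * q, p ^ 2 - q ^ 2, p ^ 2 + q ^ 2, by positivity, hpq, by positivity,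
    by ring, by ring⟩

theorem sq_add_sq {a b c : ℚ} (ha : 0 < a) (hb : 0 < b) (hc : 0 < c)
    (habc : a ^ 2 = b ^ 2 + c ^ 2) : IsCongruentNumber (a ^ 2 + b ^ 2) := by
  have hba : b ^ 2 < a ^ 2 := by nlinarith
  refine of_sq_mul (k := a * b * c) (by positivity) ?_
  convert mul_mul_sq_sub_sq (sq_pos_of_pos hb) hba using 1
  linear_combination (-(a ^ 2 * b ^ 2 * (a ^ 2 + b ^ 2))) * habc

end IsCongruentNumber

theorem stmt_9 (s t : ℕ) (ht : 0 < t) (hst : t < s) :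
    ∃ x y z : ℚ, 0 < x ∧ 0 < y ∧ 0 < z ∧ x^2 + y^2 = z^2 ∧
      x * y = 2 * ((s:ℚ)^4 + (t:ℚ)^4 + 6 * (s:ℚ)^2 * (t:ℚ)^2) := by
  have ht' : (0 : ℚ) < t := by exact_mod_cast ht
  have hst' : (t : ℚ) < s := by exact_mod_cast hst
  have hs' : (0 : ℚ) < s := ht'.trans hst'
  have hsum : (s : ℚ) ^ 4 + t ^ 4 + 6 * s ^ 2 * t ^ 2 = (s ^ 2 + t ^ 2) ^ 2 + (2 * s * t) ^ 2 := by
    ring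
  rw [hsum]
  exact IsCongruentNumber.sq_add_sq (c := (s : ℚ) ^ 2 - t ^ 2) (by positivity) (by positivity)
    (by nlinarith) (by ring)
end

section
/- For positive integers s > t of opposite parity, the number s·t·(s² + t²)/2 is a congruent number: there exist positive rational numbers x, y, z with x² + y² = z² and x·y = s·t·(s² + t²). -/
/-!
Euclid's triple for `m = s² + t²`, `n = 2st` has first leg `m² - n² = (s² - t²)²`, a square
`w²`. Scaling the right triangle `(w², 2mn, m² + n²)` by `1 / (2w)` gives a rational right
triangle whose legs multiply to `2mn / 4 = st(s² + t²)`.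
-/

theorem exists_right_triangle_mul_eq_of_sq_sq_add_sq {K : Type*} [Field K] [LinearOrder K]
    [IsStrictOrderedRing K] {w b c : K} (hw : 0 < w) (hb : 0 < b) (hc : 0 < c)
    (h : (w ^ 2) ^ 2 + b ^ 2 = c ^ 2) :
    ∃ x y z : K, 0 < x ∧ 0 < y ∧ 0 < z ∧ x ^ 2 + y ^ 2 = z ^ 2 ∧ x * y = b / 4 := by
  refine ⟨b / (2 * w), w / 2, c / (2 * w), by positivity, by positivity, by positivity, ?_, ?_⟩
  · field_simp
    linear_combination h
  · field_simp
    norm_num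

theorem exists_right_triangle_mul_eq {K : Type*} [Field K] [LinearOrder K]
    [IsStrictOrderedRing K] {s t : K} (ht : 0 < t) (hst : t < s) :
    ∃ x y z : K, 0 < x ∧ 0 < y ∧ 0 < z ∧ x ^ 2 + y ^ 2 = z ^ 2 ∧
      x * y = s * t * (s ^ 2 + t ^ 2) := by
  have hs : 0 < s := ht.trans hst
  have hw : 0 < s ^ 2 - t ^ 2 := by nlinarith
  have euclid : ((s ^ 2 - t ^ 2) ^ 2) ^ 2 + (2 * (s ^ 2 + t ^ 2) * (2 * s * t)) ^ 2 =
      ((s ^ 2 + t ^ 2) ^ 2 + (2 * s * t) ^ 2) ^ 2 := by ring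
  obtain ⟨x, y, z, hx, hy, hz, hxyz, hprod⟩ :=
    exists_right_triangle_mul_eq_of_sq_sq_add_sq hw (by positivity) (by positivity) euclid
  exact ⟨x, y, z, hx, hy, hz, hxyz, by rw [hprod]; ring⟩

theorem stmt_10_general (s t : ℕ) (ht : 0 < t) (hst : t < s) :
    ∃ x y z : ℚ, 0 < x ∧ 0 < y ∧ 0 < z ∧ x^2 + y^2 = z^2 ∧
      x * y = (s : ℚ) * t * ((s:ℚ)^2 + (t:ℚ)^2) :=
  exists_right_triangle_mul_eq (by exact_mod_cast ht) (by exact_mod_cast hst)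

theorem stmt_10 (s t : ℕ) (ht : 0 < t) (hst : t < s) (hpar : Odd (s + t)) :
    ∃ x y z : ℚ, 0 < x ∧ 0 < y ∧ 0 < z ∧ x^2 + y^2 = z^2 ∧
      x * y = (s : ℚ) * t * ((s:ℚ)^2 + (t:ℚ)^2) :=
  stmt_10_general s t ht hst
end

section
/- For every positive integer k, the number k·(k+1)·(2k+1) is a congruent number: there exist positive rational numbers x, y, z with x² + y² = z² and x·y = 2·k·(k+1)·(2k+1). -/
/-! Euclid's parametrization with `m = k + 1`, `n = k` gives the right triangle with legs
`2k(k+1)` and `2k+1` and hypotenuse `2k² + 2k + 1`, whose area is `k(k+1)(2k+1)`. -/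

theorem exists_right_triangle_of_euclid {R : Type*} [CommRing R] [LinearOrder R]
    [IsStrictOrderedRing R] {m n : R} (hn : 0 < n) (hnm : n < m) :
    ∃ x y z : R, 0 < x ∧ 0 < y ∧ 0 < z ∧ x ^ 2 + y ^ 2 = z ^ 2 ∧
      x * y = 2 * (m * n * (m ^ 2 - n ^ 2)) := by
  have hm : 0 < m := hn.trans hnm
  have hleg : 0 < m ^ 2 - n ^ 2 := sub_pos.2 (pow_lt_pow_left₀ hnm hn.le two_ne_zero)
  exact ⟨2 * m * n, m ^ 2 - n ^ 2, m ^ 2 + n ^ 2, by positivity, hleg, by positivity,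
    by ring, by ring⟩

theorem stmt_13 (k : ℕ) (hk : 0 < k) :
    ∃ x y z : ℚ, 0 < x ∧ 0 < y ∧ 0 < z ∧ x^2 + y^2 = z^2 ∧
      x * y = 2 * (k * (k + 1) * (2 * k + 1)) := by
  obtain ⟨x, y, z, hx, hy, hz, hpyth, harea⟩ :=
    exists_right_triangle_of_euclid (m := (k + 1 : ℚ)) (n := k) (by exact_mod_cast hk)
      (lt_add_one _)
  exact ⟨x, y, z, hx, hy, hz, hpyth, by rw [harea]; ring⟩
end

section
/- For every positive integer k, the number (2k+1)·(2k² + 2k + 1) is a congruent number: there exist positive rational numbers x, y, z with x² + y² = z² and x·y = 2·(2k+1)·(2k² + 2k + 1). -/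
/-!
If `a² + b² = c²` with `b ≠ 0`, then `(2ac/b)² + b² = ((a² + c²)/b)²`, since `(a² + c²)² - 4a²c² = (c² - a²)² = b⁴`;
this right triangle has area `ac`. Applied to the triple `(2k + 1, 2k² + 2k, 2k² + 2k + 1)` coming from `(m, n) = (k + 1, k)`,
it shows that `(2k + 1)(2k² + 2k + 1)` is congruent.
-/

theorem sq_add_sq_of_leg_mul_hypotenuse {K : Type*} [Field K] {a b c : K} (hb : b ≠ 0)
    (h : a ^ 2 + b ^ 2 = c ^ 2) : (2 * a * c / b) ^ 2 + b ^ 2 = ((a ^ 2 + c ^ 2) / b) ^ 2 := by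
  field_simp
  linear_combination (c ^ 2 - a ^ 2 + b ^ 2) * h

theorem exists_right_triangle_of_leg_mul_hypotenuse {K : Type*} [Field K] [LinearOrder K]
    [IsStrictOrderedRing K] {a b c : K} (ha : 0 < a) (hb : 0 < b) (hc : 0 < c)
    (h : a ^ 2 + b ^ 2 = c ^ 2) :
    ∃ x y z : K, 0 < x ∧ 0 < y ∧ 0 < z ∧ x ^ 2 + y ^ 2 = z ^ 2 ∧ x * y = 2 * (a * c) :=
  ⟨2 * a * c / b, b, (a ^ 2 + c ^ 2) / b, by positivity, hb, by positivity,
    sq_add_sq_of_leg_mul_hypotenuse hb.ne' h, by field_simp⟩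

theorem stmt_14 (k : ℕ) (hk : 0 < k) :
    ∃ x y z : ℚ, 0 < x ∧ 0 < y ∧ 0 < z ∧ x^2 + y^2 = z^2 ∧
      x * y = 2 * ((2 * k + 1) * (2 * (k:ℚ)^2 + 2 * k + 1)) := by
  have hk : (0 : ℚ) < k := by exact_mod_cast hk
  exact exists_right_triangle_of_leg_mul_hypotenuse (b := 2 * (k : ℚ) ^ 2 + 2 * k)
    (by positivity) (by positivity) (by positivity) (by ring)
end

section
/- For every positive integer k, the number k·(4k² + 1) is a congruent number: there exist positive rational numbers x, y, z with x² + y² = z² and x·y = 2·k·(4k² + 1). -/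
theorem IsCongruentNumber.of_mul_sq_s15 {n s : ℚ} (hs : 0 < s) (h : IsCongruentNumber (n * s ^ 2)) :
    IsCongruentNumber n := by
  obtain ⟨x, y, z, hx, hy, hz, hpyth, harea⟩ := h
  refine ⟨x / s, y / s, z / s, by positivity, by positivity, by positivity, ?_, ?_⟩
  · rw [div_pow, div_pow, div_pow, ← add_div, hpyth]
  · rw [div_mul_div_comm, harea, ← sq]
    field_simp

theorem isCongruentNumber_euclid {m n : ℚ} (hn : 0 < n) (hnm : n < m) :
    IsCongruentNumber (m * n * (m ^ 2 - n ^ 2)) := by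
  have hm : 0 < m := hn.trans hnm
  refine ⟨m ^ 2 - n ^ 2, 2 * m * n, m ^ 2 + n ^ 2, ?_, by positivity, by positivity, by ring,
    by ring⟩
  nlinarith

theorem stmt_15 (k : ℕ) (hk : 0 < k) :
    ∃ x y z : ℚ, 0 < x ∧ 0 < y ∧ 0 < z ∧ x^2 + y^2 = z^2 ∧
      x * y = 2 * (k * (4 * (k:ℚ)^2 + 1)) := by
  have hk_one : (1 : ℚ) ≤ k := by exact_mod_cast hk
  have hscale : 0 < 2 * (4 * (k : ℚ) ^ 2 - 1) := by nlinarith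
  have hlegs : 4 * (k : ℚ) < 4 * k ^ 2 + 1 := by nlinarith [sq_nonneg (2 * (k : ℚ) - 1)]
  have htriangle := isCongruentNumber_euclid (by positivity) hlegs
  have harea : (4 * (k : ℚ) ^ 2 + 1) * (4 * k) * ((4 * k ^ 2 + 1) ^ 2 - (4 * k) ^ 2) =
      k * (4 * k ^ 2 + 1) * (2 * (4 * k ^ 2 - 1)) ^ 2 := by ring
  rw [harea] at htriangle
  exact htriangle.of_mul_sq_s15 hscale
end

section
/- Let d be a positive integer and suppose x, y are positive integers with x ≥ 2 satisfying the Pell equation x² − d·y² = 1. Then x·d is a congruent number: there exist positive rational numbers a, b, c with a² + b² = c² and a·b = 2·x·d. -/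
/-!
Scaling Euclid's triple `(x² - 1)² + (2x)² = (x² + 1)²` by `1/y` and using `x² - 1 = d y²`
gives the rational right triangle with legs `d y`, `2x/y` and hypotenuse `(x² + 1)/y`,
whose legs multiply to `2xd`.
-/

theorem pell_right_triangle {K : Type*} [Field K] {d x y : K} (hy : y ≠ 0)
    (hpell : x ^ 2 - d * y ^ 2 = 1) :
    (d * y) ^ 2 + (2 * x / y) ^ 2 = ((x ^ 2 + 1) / y) ^ 2 := by
  have hdy : d * y ^ 2 = x ^ 2 - 1 := by linear_combination -hpell
  field_simp
  linear_combination (x ^ 2 - 1 + d * y ^ 2) * hdy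

theorem stmt_17 (d x y : ℤ) (hd : 0 < d) (hx : 2 ≤ x) (hy : 0 < y)
    (hpell : x^2 - d * y^2 = 1) :
    ∃ a b c : ℚ, 0 < a ∧ 0 < b ∧ 0 < c ∧ a^2 + b^2 = c^2 ∧
      a * b = 2 * (x * d) := by
  have hdQ : (0 : ℚ) < d := by exact_mod_cast hd
  have hxQ : (0 : ℚ) < x := by exact_mod_cast (by omega : 0 < x)
  have hyQ : (0 : ℚ) < y := by exact_mod_cast hy
  have hpellQ : (x : ℚ) ^ 2 - d * (y : ℚ) ^ 2 = 1 := by exact_mod_cast hpell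
  refine ⟨d * y, 2 * x / y, (x ^ 2 + 1) / y, by positivity, by positivity, by positivity,
    pell_right_triangle hyQ.ne' hpellQ, ?_⟩
  field_simp
end
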